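/- For all integers n and k with 0 ≤ k ≤ n, it holds that C_{n+1,k} ≤ C_{n,k}. -/

import Mathlib

open Finset

/-- Mutual information of a joint distribution `q` on `α × β`, where the output
marginal is supported inside the finite set `Ys`. Terms with zero joint
probability vanish since they are multiplied by `q x y = 0`. -/
noncomputable def MI {α : Type*} [Fintype α] {β : Type*} [DecidableEq β]
    (q : α → β → ℝ) (Ys : Finset β) : ℝ :=
  ∑ x : α, ∑ y ∈ Ys, q x y *
    Real.logb 2 (q x y / ((∑ y' ∈ Ys, q x y') * (∑ x' : α, q x' y)))

/-- `p` is a probability distribution on the finite type `α`. -/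
def IsDist {α : Type*} [Fintype α] (p : α → ℝ) : Prop :=
  (∀ a, 0 ≤ p a) ∧ ∑ a : α, p a = 1

/-- The subsequence of `x` obtained by keeping exactly the positions in `S`. -/
def delOutput {n : ℕ} (x : Fin n → Bool) (S : Finset (Fin n)) : List Bool :=
  (S.sort (· ≤ ·)).map x

/-- All binary strings of length at most `n`. -/
def listsUpTo (n : ℕ) : Finset (List Bool) :=
  (Finset.range (n + 1)).biUnion
    (fun k => Finset.image (fun v : Fin k → Bool => List.ofFn v) Finset.univ)

/-- Transition probability of the binary deletion channel `W_n^d`: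
each bit is deleted independently with probability `d`. -/
noncomputable def Wdel (n : ℕ) (d : ℝ) (x : Fin n → Bool) (y : List Bool) : ℝ :=
  ∑ S : Finset (Fin n),
    if delOutput x S = y then (1 - d) ^ S.card * d ^ (n - S.card) else 0

/-- `C_n(d)`: the supremum of `I(X;Y)` over input distributions on `{0,1}^n`,
where `Y` is the output of the deletion channel `W_n^d` on input `X`. -/
noncomputable def Cdel (n : ℕ) (d : ℝ) : ℝ :=
  sSup { r | ∃ p : (Fin n → Bool) → ℝ, IsDist p ∧
    r = MI (fun x y => p x * Wdel n d x y) (listsUpTo n) }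

/-- Transition probability of the channel `W_{n,k}` which keeps a uniformly
random `k`-element subset of the `n` positions. -/
noncomputable def Wnk (n k : ℕ) (x : Fin n → Bool) (y : List Bool) : ℝ :=
  (∑ S ∈ Finset.powersetCard k (Finset.univ : Finset (Fin n)),
      if delOutput x S = y then (1 : ℝ) else 0) / (n.choose k : ℝ)

/-- `C_{n,k}`: the supremum of `I(X;Y)` over input distributions on `{0,1}^n`,
where `Y` is the output of `W_{n,k}` on input `X`. -/
noncomputable def Cnk (n k : ℕ) : ℝ :=
  sSup { r | ∃ p : (Fin n → Bool) → ℝ, IsDist p ∧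
    r = MI (fun x y => p x * Wnk n k x y) (listsUpTo n) }


/-
Deleting one uniformly random position of a string of length `n + 1` and then keeping a uniformly
random `k`-subset of the remaining `n` positions is the same as keeping a uniformly random
`k`-subset of all `n + 1` positions. Hence `W_{n+1,k}` factors as a random one-bit deletion `Z`
followed by `W_{n,k}`, so `X → Z → Y` is a Markov chain and the data processing inequality gives
`I(X;Y) ≤ I(Z;Y) ≤ C_{n,k}`. For the data processing inequality, `I(X;Y) ≤ I((X,Z);Y)` because
merging input symbols cannot increase mutual information (log-sum inequality), and
`I((X,Z);Y) = I(Z;Y)` because `Y` depends on `(X,Z)` only through `Z`.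
-/

lemma sub_mul_le_mul_sub_log {a b s : ℝ} (ha : 0 ≤ a) (hb : 0 ≤ b) (hab : b = 0 → a = 0)
    (hs : 0 < s) : a - s * b ≤ a * (Real.log (a / b) - Real.log s) := by
  rcases ha.eq_or_lt with rfl | ha
  · simpa using mul_nonneg hs.le hb
  have hb : 0 < b := hb.lt_of_ne fun h => ha.ne' (hab h.symm)
  have key := Real.one_sub_inv_le_log_of_pos (show 0 < a / (b * s) by positivity)
  rw [Real.log_div ha.ne' (by positivity), Real.log_mul hb.ne' hs.ne'] at key
  rw [Real.log_div ha.ne' hb.ne']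
  calc a - s * b = a * (1 - (a / (b * s))⁻¹) := by field_simp
    _ ≤ a * (Real.log a - Real.log b - Real.log s) :=
        mul_le_mul_of_nonneg_left (by linarith) ha.le

theorem log_sum_inequality {ι : Type*} (s : Finset ι) {a b : ι → ℝ}
    (ha : ∀ i ∈ s, 0 ≤ a i) (hb : ∀ i ∈ s, 0 ≤ b i) (hab : ∀ i ∈ s, b i = 0 → a i = 0) :
    (∑ i ∈ s, a i) * Real.log ((∑ i ∈ s, a i) / ∑ i ∈ s, b i) ≤
      ∑ i ∈ s, a i * Real.log (a i / b i) := by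
  rcases (sum_nonneg ha).eq_or_lt with hA | hA
  · rw [← hA, zero_mul]
    exact sum_nonneg fun i hi => by
      rw [(sum_eq_zero_iff_of_nonneg ha).1 hA.symm i hi, zero_mul]
  have hB : 0 < ∑ i ∈ s, b i := (sum_nonneg hb).lt_of_ne fun hB => hA.ne' <|
    sum_eq_zero fun i hi => hab i hi ((sum_eq_zero_iff_of_nonneg hb).1 hB.symm i hi)
  have key := sum_le_sum fun i hi =>
    sub_mul_le_mul_sub_log (ha i hi) (hb i hi) (hab i hi) (div_pos hA hB)
  rw [sum_sub_distrib, ← mul_sum, div_mul_cancel₀ _ hB.ne', sub_self] at key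
  simp only [mul_sub, sum_sub_distrib, ← sum_mul] at key
  linarith

lemma mul_log_div_mul_le_one {t r c : ℝ} (ht : 0 ≤ t) (hr : t ≤ r) (hc : t ≤ c) :
    t * Real.log (t / (r * c)) ≤ 1 := by
  rcases ht.eq_or_lt with rfl | ht
  · simp
  have hrc : 0 < r * c := by nlinarith
  have hsq : t * (t / (r * c)) ≤ 1 := by
    rw [← mul_div_assoc, div_le_one hrc]
    exact mul_le_mul hr hc ht.le (ht.trans_le hr).le
  nlinarith [Real.log_le_sub_one_of_pos (show 0 < t / (r * c) by positivity)]

section MutualInformation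

variable {α β γ : Type*} [Fintype α] [Fintype γ] [DecidableEq β]

lemma MI_le_card (q : α → β → ℝ) (Ys : Finset β) (hq : ∀ x y, 0 ≤ q x y) :
    MI q Ys ≤ Fintype.card α * #Ys / Real.log 2 := by
  have hterm : ∀ x, ∀ y ∈ Ys,
      q x y * Real.logb 2 (q x y / ((∑ y' ∈ Ys, q x y') * ∑ x', q x' y)) ≤ 1 / Real.log 2 := by
    intro x y hy
    rw [Real.logb, ← mul_div_assoc]
    exact div_le_div_of_nonneg_right (mul_log_div_mul_le_one (hq x y)
      (single_le_sum (fun y' _ => hq x y') hy)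
      (single_le_sum (fun x' _ => hq x' y) (mem_univ x))) (Real.log_nonneg one_le_two)
  calc MI q Ys ≤ ∑ _x : α, ∑ _y ∈ Ys, 1 / Real.log 2 :=
        sum_le_sum fun x _ => sum_le_sum (hterm x)
    _ = Fintype.card α * #Ys / Real.log 2 := by simp [div_eq_mul_inv, mul_assoc]

lemma MI_eq_of_subset (q : α → β → ℝ) {Ys Ys' : Finset β} (h : Ys ⊆ Ys')
    (h0 : ∀ x, ∀ y ∈ Ys', y ∉ Ys → q x y = 0) : MI q Ys' = MI q Ys := by
  unfold MI
  refine sum_congr rfl fun x _ => ?_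
  rw [← sum_subset h (h0 x)]
  exact (sum_subset h fun y hy hny => by rw [h0 x y hy hny, zero_mul]).symm

theorem MI_sum_snd_le (t : α × γ → β → ℝ) (ht : ∀ a y, 0 ≤ t a y) (Ys : Finset β) :
    MI (fun x y => ∑ z, t (x, z) y) Ys ≤ MI t Ys := by
  set R : α × γ → ℝ := fun a => ∑ y' ∈ Ys, t a y'
  set c : β → ℝ := fun y => ∑ a, t a y
  have hcol : ∀ y, ∑ x, ∑ z, t (x, z) y = c y := fun y =>
    (Fintype.sum_prod_type fun a => t a y).symm
  have hrow : ∀ x, ∑ y ∈ Ys, ∑ z, t (x, z) y = ∑ z, R (x, z) := fun x => sum_comm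
  have hzero : ∀ x, ∀ y ∈ Ys, ∀ z, R (x, z) * c y = 0 → t (x, z) y = 0 := by
    intro x y hy z h
    rcases mul_eq_zero.1 h with h | h
    · exact le_antisymm (h ▸ single_le_sum (fun y' _ => ht _ y') hy) (ht _ y)
    · exact le_antisymm (h ▸ single_le_sum (fun a _ => ht a y) (mem_univ _)) (ht _ y)
  have hterm : ∀ x, ∀ y ∈ Ys,
      (∑ z, t (x, z) y) * Real.logb 2 ((∑ z, t (x, z) y) / ((∑ z, R (x, z)) * c y)) ≤
        ∑ z, t (x, z) y * Real.logb 2 (t (x, z) y / (R (x, z) * c y)) := by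
    intro x y hy
    have hls := log_sum_inequality univ
      (a := fun z => t (x, z) y) (b := fun z => R (x, z) * c y)
      (fun z _ => ht (x, z) y)
      (fun z _ => mul_nonneg (sum_nonneg fun y' _ => ht _ y') (sum_nonneg fun a _ => ht a y))
      (fun z _ => hzero x y hy z)
    simp only [Real.logb, ← mul_div_assoc, ← sum_div, sum_mul] at hls ⊢
    exact div_le_div_of_nonneg_right hls (Real.log_nonneg one_le_two)
  calc MI (fun x y => ∑ z, t (x, z) y) Ys
      ≤ ∑ x, ∑ y ∈ Ys, ∑ z, t (x, z) y * Real.logb 2 (t (x, z) y / (R (x, z) * c y)) := by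
        unfold MI
        simp only [hcol, hrow]
        exact sum_le_sum fun x _ => sum_le_sum (hterm x)
    _ = MI t Ys := by
        unfold MI
        rw [Fintype.sum_prod_type]
        exact sum_congr rfl fun x _ => sum_comm

lemma mul_mul_logb_mul_div {s v r c : ℝ} (b : ℝ) (hs : 0 ≤ s) :
    s * v * Real.logb b (s * v / (s * r * c)) = s * (v * Real.logb b (v / (r * c))) := by
  rcases hs.eq_or_lt with rfl | hs
  · simp
  rw [mul_assoc s r, mul_div_mul_left _ _ hs.ne', mul_assoc]

theorem MI_mul_snd_eq (w : α × γ → ℝ) (hw : ∀ a, 0 ≤ w a) (V : γ → β → ℝ) (Ys : Finset β) :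
    MI (fun a y => w a * V a.2 y) Ys = MI (fun z y => (∑ x, w (x, z)) * V z y) Ys := by
  set c : β → ℝ := fun y => ∑ z, (∑ x, w (x, z)) * V z y
  have hcol : ∀ y, ∑ a, w a * V a.2 y = c y := fun y => by
    simp only [c, sum_mul, Fintype.sum_prod_type_right]
  set G : γ → ℝ := fun z =>
    ∑ y ∈ Ys, V z y * Real.logb 2 (V z y / ((∑ y' ∈ Ys, V z y') * c y))
  have hG : ∀ s, 0 ≤ s → ∀ z, ∑ y ∈ Ys, s * V z y *
      Real.logb 2 (s * V z y / ((∑ y' ∈ Ys, s * V z y') * c y)) = s * G z := fun s hs z => by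
    simp only [G, ← mul_sum, mul_mul_logb_mul_div 2 hs]
  have lhs : MI (fun a y => w a * V a.2 y) Ys = ∑ a, w a * G a.2 := by
    unfold MI
    simp only [hcol]
    exact sum_congr rfl fun a _ => hG _ (hw a) a.2
  have rhs : MI (fun z y => (∑ x, w (x, z)) * V z y) Ys = ∑ z, (∑ x, w (x, z)) * G z :=
    sum_congr rfl fun z _ => hG _ (sum_nonneg fun x _ => hw (x, z)) z
  rw [lhs, rhs, Fintype.sum_prod_type_right]
  simp only [sum_mul]

theorem MI_le_of_markovChain (p : α → ℝ) (hp : ∀ x, 0 ≤ p x) (K : α → γ → ℝ)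
    (hK : ∀ x z, 0 ≤ K x z) (V : γ → β → ℝ) (hV : ∀ z y, 0 ≤ V z y) (Ys : Finset β) :
    MI (fun x y => p x * ∑ z, K x z * V z y) Ys ≤
      MI (fun z y => (∑ x, p x * K x z) * V z y) Ys := by
  calc MI (fun x y => p x * ∑ z, K x z * V z y) Ys
      = MI (fun x y => ∑ z, p x * K x z * V z y) Ys := by simp only [mul_sum, mul_assoc]
    _ ≤ MI (fun (a : α × γ) y => p a.1 * K a.1 a.2 * V a.2 y) Ys :=
        MI_sum_snd_le (fun a y => p a.1 * K a.1 a.2 * V a.2 y)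
          (fun a y => mul_nonneg (mul_nonneg (hp _) (hK _ _)) (hV _ _)) Ys
    _ = MI (fun z y => (∑ x, p x * K x z) * V z y) Ys :=
        MI_mul_snd_eq _ (fun a => mul_nonneg (hp _) (hK _ _)) V Ys

end MutualInformation

lemma IsDist.exists_of_nonempty {α : Type*} [Fintype α] [Nonempty α] :
    ∃ p : α → ℝ, IsDist p := by
  classical
  let a₀ : α := Classical.arbitrary α
  exact ⟨fun a => if a = a₀ then 1 else 0, fun a => by positivity, by simp⟩

lemma IsDist.comp_kernel {α γ : Type*} [Fintype α] [Fintype γ] {p : α → ℝ} (hp : IsDist p)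
    {K : α → γ → ℝ} (hK : ∀ x z, 0 ≤ K x z) (hK1 : ∀ x, ∑ z, K x z = 1) :
    IsDist fun z => ∑ x, p x * K x z := by
  refine ⟨fun z => sum_nonneg fun x _ => mul_nonneg (hp.1 x) (hK x z), ?_⟩
  rw [sum_comm]
  simp only [← mul_sum, hK1, mul_one, hp.2]

lemma mem_listsUpTo {n : ℕ} {l : List Bool} : l ∈ listsUpTo n ↔ l.length ≤ n := by
  simp only [listsUpTo, mem_biUnion, mem_range, mem_image, mem_univ, true_and]
  constructor
  · rintro ⟨k, hk, v, rfl⟩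
    rw [List.length_ofFn]
    omega
  · exact fun h => ⟨l.length, by omega, l.get, List.ofFn_get l⟩

lemma length_delOutput {n : ℕ} (x : Fin n → Bool) (S : Finset (Fin n)) :
    (delOutput x S).length = #S := by
  rw [delOutput, List.length_map, length_sort]

lemma delOutput_comp_succAbove {n : ℕ} (i : Fin (n + 1)) (x : Fin (n + 1) → Bool)
    (S : Finset (Fin n)) :
    delOutput (x ∘ i.succAbove) S = delOutput x (S.map i.succAboveEmb) := by
  rw [delOutput, delOutput, ← ((Fin.strictMono_succAbove i).strictMonoOn S).map_finsetSort,
    List.map_map]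
  rfl

lemma Wnk_nonneg (n k : ℕ) (x : Fin n → Bool) (y : List Bool) : 0 ≤ Wnk n k x y :=
  div_nonneg (sum_nonneg fun _ _ => by positivity) (Nat.cast_nonneg _)

lemma Wnk_eq_zero_of_length_ne {n k : ℕ} (x : Fin n → Bool) {y : List Bool}
    (hy : y.length ≠ k) : Wnk n k x y = 0 := by
  rw [Wnk, sum_eq_zero, zero_div]
  intro S hS
  rw [if_neg]
  rintro rfl
  exact hy (by rw [length_delOutput, (mem_powersetCard.1 hS).2])

lemma MI_mul_Wnk_listsUpTo {n k m m' : ℕ} (hkm : k ≤ m) (hm : m ≤ m')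
    (p : (Fin n → Bool) → ℝ) :
    MI (fun x y => p x * Wnk n k x y) (listsUpTo m') =
      MI (fun x y => p x * Wnk n k x y) (listsUpTo m) := by
  refine MI_eq_of_subset _ (fun l hl => mem_listsUpTo.2 (le_trans (mem_listsUpTo.1 hl) hm)) ?_
  intro x y _ hy
  rw [Wnk_eq_zero_of_length_ne x fun h => hy (mem_listsUpTo.2 (h ▸ hkm)), mul_zero]

lemma powersetCard_map_succAboveEmb {n : ℕ} (k : ℕ) (i : Fin (n + 1)) :
    (powersetCard k (univ : Finset (Fin n))).map (mapEmbedding i.succAboveEmb).toEmbedding =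
      {T ∈ powersetCard k (univ : Finset (Fin (n + 1))) | i ∉ T} := by
  rw [← powersetCard_map, map_eq_image, Fin.coe_succAboveEmb, Fin.image_succAbove_univ]
  ext T
  simp [subset_compl_singleton, and_comm]

/-- Double counting of the pairs `(i, T)` with `i ∉ T`, `#T = k` and `delOutput x T = y`. -/
lemma sum_count_delOutput_comp_succAbove {n k : ℕ} (x : Fin (n + 1) → Bool) (y : List Bool) :
    ∑ i : Fin (n + 1), ∑ S ∈ powersetCard k (univ : Finset (Fin n)),
        (if delOutput (x ∘ i.succAbove) S = y then (1 : ℝ) else 0) =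
      (n + 1 - k : ℕ) * ∑ T ∈ powersetCard k (univ : Finset (Fin (n + 1))),
        (if delOutput x T = y then (1 : ℝ) else 0) := by
  have hfiber : ∀ i : Fin (n + 1), ∑ S ∈ powersetCard k (univ : Finset (Fin n)),
      (if delOutput (x ∘ i.succAbove) S = y then (1 : ℝ) else 0) =
        ∑ T ∈ powersetCard k univ,
          if i ∉ T then (if delOutput x T = y then 1 else 0) else 0 := by
    intro i
    rw [← sum_filter (fun T => i ∉ T), ← powersetCard_map_succAboveEmb, sum_map]
    exact sum_congr rfl fun S _ => by rw [delOutput_comp_succAbove]; rfl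
  simp only [hfiber]
  rw [sum_comm, mul_sum]
  refine sum_congr rfl fun T hT => ?_
  rw [← sum_filter, sum_const, filter_notMem_eq_sdiff, ← compl_eq_univ_sdiff, card_compl,
    Fintype.card_fin, (mem_powersetCard.1 hT).2, nsmul_eq_mul]

lemma Wnk_succ {n k : ℕ} (hk : k ≤ n) (x : Fin (n + 1) → Bool) (y : List Bool) :
    Wnk (n + 1) k x y = (∑ i : Fin (n + 1), Wnk n k (x ∘ i.succAbove) y) / (n + 1) := by
  have hchoose : ((n + 1 : ℕ) : ℝ) * n.choose k = (n + 1).choose k * (n + 1 - k : ℕ) := by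
    exact_mod_cast (Nat.add_one_mul_choose_eq n k).trans (Nat.choose_succ_right_eq (n + 1) k)
  have h1 : (n.choose k : ℝ) ≠ 0 := by have := Nat.choose_pos hk; positivity
  have h2 : ((n + 1).choose k : ℝ) ≠ 0 := by
    have := Nat.choose_pos (hk.trans n.le_succ); positivity
  simp only [Wnk, ← sum_div, sum_count_delOutput_comp_succAbove]
  push_cast at hchoose ⊢
  field_simp
  linear_combination (∑ T ∈ powersetCard k (univ : Finset (Fin (n + 1))),
    (if delOutput x T = y then (1 : ℝ) else 0)) * hchoose

noncomputable def deleteOne (n : ℕ) (x : Fin (n + 1) → Bool) (z : Fin n → Bool) : ℝ :=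
  ∑ i : Fin (n + 1), if x ∘ i.succAbove = z then ((n : ℝ) + 1)⁻¹ else 0

lemma deleteOne_nonneg (n : ℕ) (x : Fin (n + 1) → Bool) (z : Fin n → Bool) :
    0 ≤ deleteOne n x z :=
  sum_nonneg fun _ _ => by positivity

lemma sum_deleteOne_mul (n : ℕ) (x : Fin (n + 1) → Bool) (f : (Fin n → Bool) → ℝ) :
    ∑ z, deleteOne n x z * f z = (∑ i : Fin (n + 1), f (x ∘ i.succAbove)) / (n + 1) := by
  simp only [deleteOne, sum_mul, ite_mul, zero_mul]
  rw [sum_comm]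
  simp [div_eq_inv_mul, mul_sum]

lemma sum_deleteOne (n : ℕ) (x : Fin (n + 1) → Bool) : ∑ z, deleteOne n x z = 1 := by
  simpa [div_self (by positivity : (n : ℝ) + 1 ≠ 0)] using sum_deleteOne_mul n x 1

lemma le_Cnk {n k : ℕ} {p : (Fin n → Bool) → ℝ} (hp : IsDist p) :
    MI (fun x y => p x * Wnk n k x y) (listsUpTo n) ≤ Cnk n k := by
  refine le_csSup ⟨Fintype.card (Fin n → Bool) * #(listsUpTo n) / Real.log 2, ?_⟩ ⟨p, hp, rfl⟩
  rintro _ ⟨q, hq, rfl⟩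
  exact MI_le_card _ _ fun x y => mul_nonneg (hq.1 x) (Wnk_nonneg n k x y)

lemma Cnk_le {n k : ℕ} {c : ℝ}
    (h : ∀ p, IsDist p → MI (fun x y => p x * Wnk n k x y) (listsUpTo n) ≤ c) :
    Cnk n k ≤ c := by
  obtain ⟨p, hp⟩ := IsDist.exists_of_nonempty (α := Fin n → Bool)
  refine csSup_le ⟨_, p, hp, rfl⟩ ?_
  rintro _ ⟨q, hq, rfl⟩
  exact h q hq

/-- For all `0 ≤ k ≤ n`, `C_{n+1,k} ≤ C_{n,k}`. -/
theorem Cnk_anti (n k : ℕ) (hk : k ≤ n) : Cnk (n + 1) k ≤ Cnk n k := by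
  refine Cnk_le fun p hp => ?_
  have hfactor : ∀ x y, Wnk (n + 1) k x y = ∑ z, deleteOne n x z * Wnk n k z y := fun x y => by
    rw [sum_deleteOne_mul, Wnk_succ hk]
  calc MI (fun x y => p x * Wnk (n + 1) k x y) (listsUpTo (n + 1))
      = MI (fun x y => p x * ∑ z, deleteOne n x z * Wnk n k z y) (listsUpTo n) := by
        rw [MI_mul_Wnk_listsUpTo hk n.le_succ]
        simp only [hfactor]
    _ ≤ MI (fun z y => (∑ x, p x * deleteOne n x z) * Wnk n k z y) (listsUpTo n) :=
        MI_le_of_markovChain p hp.1 _ (deleteOne_nonneg n) _ (Wnk_nonneg n k) _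
    _ ≤ Cnk n k := le_Cnk (hp.comp_kernel (deleteOne_nonneg n) (sum_deleteOne n))
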